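/- In any automorphic loop Q, for all x, y in Q, the identity (y²x)x⁻¹ = (yx)(x⁻¹y) holds. -/
import Mathlib


/-- A loop: a set with a binary operation, a two-sided identity, and
unique left and right division (left and right translations are bijective). -/
class Loop (Q : Type*) extends Mul Q, One Q where
  one_mul : ∀ x : Q, 1 * x = x
  mul_one : ∀ x : Q, x * 1 = x
  lmul_bij : ∀ a : Q, Function.Bijective (fun x : Q => a * x)
  rmul_bij : ∀ a : Q, Function.Bijective (fun x : Q => x * a)

namespace Loop

variable {Q : Type*} [Loop Q]

/-- Left translation `L_a : x ↦ a * x` as a bijection. -/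
noncomputable def Lt (a : Q) : Q ≃ Q :=
  Equiv.ofBijective (fun x : Q => a * x) (Loop.lmul_bij a)

/-- Right translation `R_a : x ↦ x * a` as a bijection. -/
noncomputable def Rt (a : Q) : Q ≃ Q :=
  Equiv.ofBijective (fun x : Q => x * a) (Loop.rmul_bij a)

@[simp] theorem Lt_apply (a x : Q) : Lt a x = a * x := rfl
@[simp] theorem Rt_apply (a x : Q) : Rt a x = x * a := rfl

/-- The conjugation inner mapping `T_x = R_x L_x⁻¹` (right-action convention:
`(y)T_x` is the unique `z` with `x*z = y*x`). -/
noncomputable def Tt (a : Q) : Q ≃ Q := (Rt a).trans (Lt a).symm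

/-- The inner mapping `R_{(x,y)} = R_x R_y R_{xy}⁻¹` (right-action convention). -/
noncomputable def Rinner (x y : Q) : Q ≃ Q :=
  (Rt x).trans ((Rt y).trans (Rt (x * y)).symm)

/-- The inner mapping `L_{(x,y)} = L_x L_y L_{yx}⁻¹` (right-action convention). -/
noncomputable def Linner (x y : Q) : Q ≃ Q :=
  (Lt x).trans ((Lt y).trans (Lt (y * x)).symm)

/-- A bijection of a loop is multiplicative (an automorphism). -/
def IsAut (f : Q ≃ Q) : Prop := ∀ a b : Q, f (a * b) = f a * f b

end Loop

open Loop

/-- An automorphic loop: a loop in which all inner mappings are automorphisms.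
Since the inner mapping group is generated by the mappings `R_{(x,y)}`,
`L_{(x,y)}` and `T_x`, it suffices that these generators are automorphisms.
Automorphic loops are power associative, so every element has a two-sided
inverse, which we record in the structure. -/
class AutomorphicLoop (Q : Type*) extends Loop Q, Inv Q where
  mul_inv : ∀ x : Q, x * x⁻¹ = 1
  inv_mul : ∀ x : Q, x⁻¹ * x = 1
  Rinner_isAut : ∀ x y : Q, IsAut (Rinner x y)
  Linner_isAut : ∀ x y : Q, IsAut (Linner x y)
  T_isAut : ∀ x : Q, IsAut (Tt x)


section Proof
variable {Q : Type*} [AutomorphicLoop Q]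

private lemma Tt_apply' (a c : Q) : Tt a c = (Lt a).symm (c * a) := rfl

private lemma Rinner_apply' (x y a : Q) :
    Rinner x y a = (Rt (x * y)).symm ((a * x) * y) := rfl

private lemma Linner_apply' (x y a : Q) :
    Linner x y a = (Lt (y * x)).symm (y * (x * a)) := rfl

private lemma Tt_self (a : Q) : Tt a a = a := by
  rw [Tt_apply', Equiv.symm_apply_eq]; rfl

/-- Automorphic loops are flexible. -/
private lemma flex (a b : Q) : a * (b * a) = (a * b) * a := by
  have h1 := AutomorphicLoop.T_isAut a a b
  rw [Tt_self] at h1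
  have h3 : a * Tt a b = b * a := (Lt a).apply_symm_apply (b * a)
  rw [Tt_apply', Equiv.symm_apply_eq] at h1
  have h4 : (a * b) * a = a * (a * Tt a b) := h1
  rw [h3] at h4
  exact h4.symm

private lemma Rt_one_symm (c : Q) : (Rt (1 : Q)).symm c = c := by
  rw [Equiv.symm_apply_eq]
  exact (Loop.mul_one c).symm

end Proof

theorem stmt4 {Q : Type*} [AutomorphicLoop Q] (x y : Q) :
    ((y * y) * x) * x⁻¹ = (y * x) * (x⁻¹ * y) := by
  have hxinv : x * x⁻¹ = 1 := AutomorphicLoop.mul_inv x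
  have hinvx : x⁻¹ * x = 1 := AutomorphicLoop.inv_mul x
  set u := y * x with hu
  set w := u * x⁻¹ with hw
  -- Step A : LHS = w * w
  have hA := AutomorphicLoop.Rinner_isAut x x⁻¹ y y
  rw [Rinner_apply', Rinner_apply', hxinv, Rt_one_symm, Rt_one_symm] at hA
  -- hA : ((y*y)*x)*x⁻¹ = w * w
  -- Step B : RHS = w * w
  set s := (Lt w).symm u with hs
  have hEx : Linner x⁻¹ u x = s := by
    rw [Linner_apply', hinvx, Loop.mul_one]
  have hEu : Linner x⁻¹ u u = u := by
    rw [Linner_apply', flex u x⁻¹]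
    exact (Lt w).symm_apply_apply u
  have hmulE := AutomorphicLoop.Linner_isAut x⁻¹ u y x
  rw [hEx, ← hu, hEu] at hmulE
  -- hmulE : u = Linner x⁻¹ u y * s
  have hws : w * s = u := (Lt w).apply_symm_apply u
  have hEy : Linner x⁻¹ u y = w := by
    apply (Loop.rmul_bij s).1
    show Linner x⁻¹ u y * s = w * s
    rw [← hmulE, hws]
  have hRHS : u * (x⁻¹ * y) = w * w := by
    have h5 : (Lt w).symm (u * (x⁻¹ * y)) = w := by
      rw [← Linner_apply', hEy]
    rw [Equiv.symm_apply_eq] at h5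
    exact h5
  rw [hA, ← hRHS]
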